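/- arXiv:1812.04363 — 4 statements merged into one kernel-verified Lean document; each statement's English description precedes it below -/
import Mathlib

section
/- Let S be a finite nonempty set and let e : S → ℝ denote the constant function 1. Let T : (S → ℝ) → (S → ℝ) be an operator that is monotone (u ≤ v pointwise implies Tu ≤ Tv pointwise) and additively homogeneous (T(v + λ·e) = T(v) + λ·e for every v : S → ℝ and λ ∈ ℝ). Let h : S → ℝ and g, g⁺ ∈ ℝ be such that (i) T(h) ≥ h + g·e pointwise, and (ii) for every s ∈ S, the differences (T^{n+1}h)(s) − (T^{n}h)(s) converge to g⁺ as n → ∞. Then g⁺ ≥ g. -/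
/-- **Dominance property (Proposition 1).**
If `T` is a monotone, additively homogeneous operator on `S → ℝ` (with `S` finite nonempty),
`T h ≥ h + g·e` pointwise, and for every state `s` the differences
`(T^[n+1] h) s - (T^[n] h) s` converge to `g⁺`, then `g⁺ ≥ g`. -/
theorem stmt_0 {S : Type*} [Fintype S] [Nonempty S]
    (T : (S → ℝ) → (S → ℝ))
    (hmono : ∀ u v : S → ℝ, u ≤ v → T u ≤ T v)
    (hhom : ∀ (v : S → ℝ) (lam : ℝ), T (fun s => v s + lam) = fun s => T v s + lam)
    (h : S → ℝ) (g gplus : ℝ)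
    (hdom : ∀ s, h s + g ≤ T h s)
    (hlim : ∀ s, Filter.Tendsto (fun n => T^[n + 1] h s - T^[n] h s)
      Filter.atTop (nhds gplus)) :
    g ≤ gplus := by
  have key : ∀ n s, T^[n] h s + g ≤ T^[n + 1] h s := by
    intro n
    induction n with
    | zero => simpa using hdom
    | succ n ih =>
      intro s
      have h1 : T (fun s => T^[n] h s + g) ≤ T (T^[n + 1] h) := hmono _ _ ih
      have h2 : T (fun s => T^[n] h s + g) = fun s => T (T^[n] h) s + g := hhom _ g
      have := h1 s
      rw [h2] at this
      simpa [Function.iterate_succ_apply'] using this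
  obtain ⟨s⟩ := (inferInstance : Nonempty S)
  refine ge_of_tendsto (hlim s) (Filter.Eventually.of_forall fun n => ?_)
  linarith [key n s]
end

section
/- Let (X_n, F_n)_{n∈ℕ} be an adapted sequence of real random variables that is almost surely bounded by a constant K (|X_n| ≤ K a.s. for all n), and let (τ_m)_{m∈ℕ} be a sequence of stopping times with respect to (F_n)_{n∈ℕ} such that for every m and every sample point ω, either τ_m(ω) < τ_{m+1}(ω) or τ_m(ω) = τ_{m+1}(ω) = +∞. For each m define Y_m := X_{τ_m + 1} − E[X_{τ_m + 1} | F_{τ_m}] and G_m := F_{τ_{m+1}}. Then (G_m)_{m∈ℕ} is a filtration, each Y_m is G_m-measurable and integrable (indeed almost surely bounded), and E[Y_{m+1} | G_m] = 0 almost surely for all m; that is, (Y_m, G_m)_{m∈ℕ} is a martingale difference sequence. -/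
open MeasureTheory

/-- The value of the process `X` at the (possibly infinite) random time `τ`, with the
convention `X_∞ := 0`. -/
noncomputable def stoppedVal {Ω : Type*} (X : ℕ → Ω → ℝ) (τ : Ω → ℕ∞) (ω : Ω) : ℝ :=
  if h : τ ω ≠ ⊤ then X ((τ ω).untop h) ω else 0

/-- The σ-algebra at the (possibly infinite) stopping time `τ`:
events `A` (measurable in the ambient σ-algebra) such that `A ∩ {τ = n} ∈ F n` for all `n`. -/
def sigmaAt {Ω : Type*} (m0 : MeasurableSpace Ω) (F : Filtration ℕ m0)
    (τ : Ω → ℕ∞) (hτ : ∀ n : ℕ, MeasurableSet[F n] {ω | τ ω = (n : ℕ∞)}) :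
    MeasurableSpace Ω where
  MeasurableSet' A := MeasurableSet[m0] A ∧
    ∀ n : ℕ, MeasurableSet[F n] (A ∩ {ω | τ ω = (n : ℕ∞)})
  measurableSet_empty :=
    ⟨MeasurableSet.empty, fun n => by simp⟩
  measurableSet_compl := fun A hA => by
    refine ⟨hA.1.compl, fun n => ?_⟩
    have hset : Aᶜ ∩ {ω | τ ω = (n : ℕ∞)} =
        {ω | τ ω = (n : ℕ∞)} \ (A ∩ {ω | τ ω = (n : ℕ∞)}) := by
      ext ω
      simp only [Set.mem_inter_iff, Set.mem_compl_iff, Set.mem_diff, Set.mem_setOf_eq]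
      tauto
    rw [hset]
    exact (hτ n).diff (hA.2 n)
  measurableSet_iUnion := fun s hs => by
    refine ⟨MeasurableSet.iUnion fun i => (hs i).1, fun n => ?_⟩
    rw [Set.iUnion_inter]
    exact MeasurableSet.iUnion fun i => (hs i).2 n

/-! Since `τ m + 1 ≤ τ (m + 1)`, the value `X (τ m + 1)` is `F (τ m + 1)`-measurable and hence
`G m`-measurable, and the σ-algebras at stopping times increase along `τ`. The increment
`Y (m + 1)` is an integrable variable minus its own conditional expectation given `G m`,
so its conditional expectation given `G m` vanishes. -/

namespace MeasureTheory

section StoppingTime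

variable {Ω : Type*} {m0 : MeasurableSpace Ω} {F : Filtration ℕ m0} {σ τ : Ω → ℕ∞}

lemma sigmaAt_le (hτ : ∀ n : ℕ, MeasurableSet[F n] {ω | τ ω = n}) : sigmaAt m0 F τ hτ ≤ m0 :=
  fun _ hA => hA.1

lemma measurableSet_sigmaAt_iff (hτ : ∀ n : ℕ, MeasurableSet[F n] {ω | τ ω = n}) {A : Set Ω} :
    MeasurableSet[sigmaAt m0 F τ hτ] A ↔
      MeasurableSet[m0] A ∧ ∀ n : ℕ, MeasurableSet[F n] (A ∩ {ω | τ ω ≤ n}) := by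
  refine and_congr_right fun _ => ⟨fun h n => ?_, fun h n => ?_⟩
  · have : A ∩ {ω | τ ω ≤ n} = ⋃ k ≤ n, A ∩ {ω | τ ω = k} := by
      ext ω
      simp [ENat.le_natCast_iff, and_comm]
    rw [this]
    exact MeasurableSet.biUnion (Set.to_countable _) fun k hk => F.mono hk _ (h k)
  · have : A ∩ {ω | τ ω = n} = A ∩ {ω | τ ω ≤ n} ∩ {ω | τ ω = n} := by
      ext ω
      simp +contextual
    rw [this]
    exact (h n).inter (hτ n)

lemma sigmaAt_mono (hσ : ∀ n : ℕ, MeasurableSet[F n] {ω | σ ω = n})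
    (hτ : ∀ n : ℕ, MeasurableSet[F n] {ω | τ ω = n}) (hle : σ ≤ τ) :
    sigmaAt m0 F σ hσ ≤ sigmaAt m0 F τ hτ := by
  intro A hA
  rw [measurableSet_sigmaAt_iff] at hA ⊢
  refine ⟨hA.1, fun n => ?_⟩
  have : A ∩ {ω | τ ω ≤ n} = A ∩ {ω | σ ω ≤ n} ∩ {ω | τ ω ≤ n} := by
    ext ω
    simpa using fun h _ => (hle ω).trans h
  rw [this]
  exact (hA.2 n).inter ((isStoppingTime_of_measurableSet_eq hτ) n)

lemma IsStoppingTime.measurableSpace_le_sigmaAt (hτ' : IsStoppingTime F τ)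
    (hτ : ∀ n : ℕ, MeasurableSet[F n] {ω | τ ω = n}) :
    hτ'.measurableSpace ≤ sigmaAt m0 F τ hτ := fun A hA =>
  (measurableSet_sigmaAt_iff hτ).2 ⟨hτ'.measurableSpace_le A hA, hA.2⟩

/-- Mathlib's `stoppedValue` takes an arbitrary value on `{τ = ⊤}`, `stoppedVal` the value `0`. -/
lemma stoppedVal_eq_indicator (X : ℕ → Ω → ℝ) (τ : Ω → ℕ∞) :
    stoppedVal X τ = {ω | τ ω ≠ ⊤}.indicator (stoppedValue X τ) := by
  ext ω
  by_cases h : τ ω = ⊤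
  · simp [stoppedVal, h]
  · simp [stoppedVal, stoppedValue, h, WithTop.untopA_eq_untop h]

lemma measurable_stoppedVal {X : ℕ → Ω → ℝ} (hX : Adapted F X) (hτ : IsStoppingTime F τ) :
    Measurable[hτ.measurableSpace] (stoppedVal X τ) := by
  rw [stoppedVal_eq_indicator]
  exact (measurable_stoppedValue hX.stronglyAdapted.isStronglyProgressive_of_discrete hτ).indicator
    (hτ.measurable (measurableSet_singleton ⊤).compl)

lemma abs_stoppedVal_le {X : ℕ → Ω → ℝ} {K : ℝ} {ω : Ω} (hK : 0 ≤ K)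
    (hX : ∀ n, |X n ω| ≤ K) : |stoppedVal X τ ω| ≤ K := by
  unfold stoppedVal
  split_ifs
  · exact hX _
  · simpa using hK

end StoppingTime

section CondExp

variable {α : Type*} {m m0 : MeasurableSpace α} {μ : Measure α} {f : α → ℝ}

lemma condExp_sub_condExp_ae_eq_zero (hm : m ≤ m0) [SigmaFinite (μ.trim hm)]
    (hf : Integrable f μ) : μ[f - μ[f|m]|m] =ᵐ[μ] 0 := by
  filter_upwards [condExp_sub hf (integrable_condExp (m := m)) m,
    condExp_condExp_of_le (f := f) le_rfl hm] with x hsub hidem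
  rw [hsub, Pi.sub_apply, hidem, Pi.zero_apply, sub_self]

lemma ae_abs_sub_condExp_le {K : ℝ} (hf : ∀ᵐ x ∂μ, |f x| ≤ K) :
    ∀ᵐ x ∂μ, |f x - μ[f|m] x| ≤ 2 * K := by
  filter_upwards [hf, ae_bdd_abs_condExp_of_ae_bdd_abs (m := m) hf] with x hfx hcx
  calc |f x - μ[f|m] x| ≤ |f x| + |μ[f|m] x| := abs_sub _ _
    _ ≤ 2 * K := by linarith

end CondExp

end MeasureTheory

open MeasureTheory

/-- **Optional skipping produces a martingale difference sequence (Lemma 6).**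
Given an adapted sequence `(X n, F n)` a.s. bounded by `K` and a strictly increasing sequence
of stopping times `(τ m)`, the sequence `Y m := X (τ m + 1) - E[X (τ m + 1) | F (τ m)]`
together with `G m := F (τ (m+1))` is a martingale difference sequence: `G` is a filtration,
each `Y m` is `G m`-measurable, integrable (indeed a.s. bounded), and
`E[Y (m+1) | G m] = 0` a.s. -/
theorem stmt_4 {Ω : Type*} {m0 : MeasurableSpace Ω} {μ : Measure Ω} [IsProbabilityMeasure μ]
    (F : Filtration ℕ m0) (X : ℕ → Ω → ℝ) (K : ℝ)
    (hadapt : Adapted F X)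
    (hbdd : ∀ n, ∀ᵐ ω ∂μ, |X n ω| ≤ K)
    (τ : ℕ → Ω → ℕ∞)
    (hτ : ∀ m n : ℕ, MeasurableSet[F n] {ω | τ m ω = (n : ℕ∞)})
    (hincr : ∀ m ω, τ m ω < τ (m + 1) ω ∨ (τ m ω = ⊤ ∧ τ (m + 1) ω = ⊤))
    (Y : ℕ → Ω → ℝ)
    (hY : ∀ m, Y m = fun ω =>
      stoppedVal X (fun ω' => τ m ω' + 1) ω -
        (μ[stoppedVal X (fun ω' => τ m ω' + 1)|sigmaAt m0 F (τ m) (hτ m)]) ω)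
    (G : ℕ → MeasurableSpace Ω)
    (hG : ∀ m, G m = sigmaAt m0 F (τ (m + 1)) (hτ (m + 1))) :
    Monotone G ∧ (∀ m, G m ≤ m0) ∧
      (∀ m, StronglyMeasurable[G m] (Y m)) ∧
      (∀ m, Integrable (Y m) μ) ∧
      (∀ m, ∀ᵐ ω ∂μ, |Y m ω| ≤ 2 * K) ∧
      (∀ m, μ[Y (m + 1)|G m] =ᵐ[μ] 0) := by
  obtain rfl : Y = _ := funext hY
  obtain rfl : G = _ := funext hG
  have hK : 0 ≤ K := (abs_nonneg _).trans (hbdd 0).exists.choose_spec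
  have hstop m : IsStoppingTime F (τ m) := isStoppingTime_of_measurableSet_eq (hτ m)
  have hsucc m : (fun ω => τ m ω + 1 : Ω → ℕ∞) ≤ τ (m + 1) := fun ω => by
    rcases hincr m ω with hlt | ⟨htop, htop'⟩
    · exact Order.add_one_le_of_lt hlt
    · simp [htop, htop']
  have hmono m : sigmaAt m0 F (τ m) (hτ m) ≤ sigmaAt m0 F (τ (m + 1)) (hτ (m + 1)) :=
    sigmaAt_mono _ _ fun ω => le_self_add.trans (hsucc m ω)
  have hZ_meas m : Measurable[sigmaAt m0 F (τ (m + 1)) (hτ (m + 1))]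
      (stoppedVal X fun ω => τ m ω + 1) :=
    (measurable_stoppedVal hadapt ((hstop m).add_const' 1)).mono
      (((hstop m).add_const' 1).measurableSpace_mono (hstop (m + 1)) (hsucc m) |>.trans
        ((hstop (m + 1)).measurableSpace_le_sigmaAt _)) le_rfl
  have hZ_bdd m : ∀ᵐ ω ∂μ, |stoppedVal X (fun ω => τ m ω + 1) ω| ≤ K := by
    filter_upwards [ae_all_iff.2 hbdd] with ω hω using abs_stoppedVal_le hK hω
  have hZ_int m : Integrable (stoppedVal X fun ω => τ m ω + 1) μ :=
    .of_bound ((hZ_meas m).mono (sigmaAt_le _) le_rfl).aestronglyMeasurable K (hZ_bdd m)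
  exact ⟨monotone_nat_of_le_succ fun m => hmono (m + 1), fun m => sigmaAt_le _,
    fun m => (hZ_meas m).stronglyMeasurable.sub (stronglyMeasurable_condExp.mono (hmono m)),
    fun m => (hZ_int m).sub integrable_condExp, fun m => ae_abs_sub_condExp_le (hZ_bdd m),
    fun m => condExp_sub_condExp_ae_eq_zero (sigmaAt_le _) (hZ_int (m + 1))⟩
end

section
/- Let p be a probability vector on a finite set S (p(s) ≥ 0, ∑_{s∈S} p(s) = 1), and let Γ := |{s ∈ S : p(s) > 0}| ≥ 1 be the size of its support. Then ∑_{s∈S} √(p(s)·(1 − p(s))) ≤ √(Γ − 1). -/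
/-- **Cauchy–Schwarz bound with the support size (used for the `√(Γ-1)` confidence width).**
If `p` is a probability vector on a finite set `S` with support of size `Γ ≥ 1`, then
`∑ s, √(p s · (1 - p s)) ≤ √(Γ - 1)`. -/
theorem stmt_14 {S : Type*} [Fintype S] (p : S → ℝ)
    (hnn : ∀ s, 0 ≤ p s) (hone : ∑ s, p s = 1)
    (Γ : ℕ) (hΓ : Γ = {s : S | 0 < p s}.ncard) (hΓ1 : 1 ≤ Γ) :
    ∑ s, Real.sqrt (p s * (1 - p s)) ≤ Real.sqrt ((Γ : ℝ) - 1) := by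
  classical
  set T : Finset S := Finset.univ.filter (fun s => 0 < p s) with hT
  have hple : ∀ s, p s ≤ 1 := by
    intro s
    rw [← hone]
    exact Finset.single_le_sum (fun i _ => hnn i) (Finset.mem_univ s)
  have hcard : Γ = T.card := by
    rw [hΓ, Set.ncard_eq_toFinset_card']
    congr 1
    ext s
    simp [hT]
  have hzero : ∀ s ∈ Finset.univ, s ∉ T → p s = 0 := by
    intro s _ hs
    simp only [hT, Finset.mem_filter, Finset.mem_univ, true_and, not_lt] at hs
    exact le_antisymm hs (hnn s)
  have h1 : ∑ s ∈ T, p s = 1 := by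
    rw [Finset.sum_subset (Finset.subset_univ T) (fun s hs hns => hzero s hs hns)]
    exact hone
  have hsum : ∑ s, Real.sqrt (p s * (1 - p s)) = ∑ s ∈ T, Real.sqrt (p s * (1 - p s)) := by
    symm
    apply Finset.sum_subset (Finset.subset_univ T)
    intro s hs hns
    rw [hzero s hs hns]
    simp
  have hQ : (1 : ℝ) / Γ ≤ ∑ s ∈ T, (p s) ^ 2 := by
    have := sq_sum_le_card_mul_sum_sq (s := T) (f := p)
    rw [h1, one_pow] at this
    rw [div_le_iff₀ (by positivity)]
    rw [hcard]
    linarith [this]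
  have hCS : ∑ s ∈ T, Real.sqrt (p s * (1 - p s)) ≤
      Real.sqrt (T.card) * Real.sqrt (∑ s ∈ T, p s * (1 - p s)) := by
    have := Real.sum_sqrt_mul_sqrt_le T (f := fun _ => (1 : ℝ))
      (g := fun s => p s * (1 - p s)) (fun i => zero_le_one)
      (fun i => mul_nonneg (hnn i) (by linarith [hple i]))
    simpa using this
  have hid : ∑ s ∈ T, p s * (1 - p s) = 1 - ∑ s ∈ T, (p s) ^ 2 := by
    simp only [mul_sub, mul_one, Finset.sum_sub_distrib, h1, sq]
  have hΓpos : (0 : ℝ) < Γ := by exact_mod_cast hΓ1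
  calc ∑ s, Real.sqrt (p s * (1 - p s))
      = ∑ s ∈ T, Real.sqrt (p s * (1 - p s)) := hsum
    _ ≤ Real.sqrt (T.card) * Real.sqrt (∑ s ∈ T, p s * (1 - p s)) := hCS
    _ = Real.sqrt ((Γ : ℝ) * (1 - ∑ s ∈ T, (p s) ^ 2)) := by
        rw [hid, ← Real.sqrt_mul (by positivity), hcard]
    _ ≤ Real.sqrt ((Γ : ℝ) - 1) := by
        apply Real.sqrt_le_sqrt
        have h2 : (Γ : ℝ) * (1 / Γ) = 1 := by field_simp
        nlinarith [hQ]
end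

section
/- Let Z be a finite nonempty set and let (z_t)_{t=1}^{T} be a sequence in Z with T ≥ 1. Let 1 = t₁ < t₂ < ⋯ < t_{m+1} = T + 1 be episode start times, and for each episode k ∈ {1,…,m} and each z ∈ Z define N_k(z) := |{t < t_k : z_t = z}| and ν_k(z) := |{t : t_k ≤ t < t_{k+1}, z_t = z}|. Assume that ν_k(z) ≤ max{1, N_k(z)} for every k and z. Then ∑_{k=1}^{m} ∑_{z∈Z} ν_k(z)/(N_k(z) + 1) ≤ 2·|Z|·(1 + ln T). -/
/-!
For a fixed `z`, write `a_k = N_k(z)` and `b_k = ν_k(z)`, so that `a_{k+1} = a_k + b_k` and, by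
the doubling rule, `b_k ≤ a_k + 1`. Then `b_k / (a_k + 1) ≤ 2 (log (a_{k+1} + 1) - log (a_k + 1))`,
because `log (x + y) - log x ≥ y / (x + y) ≥ y / (2x)` for `0 ≤ y ≤ x`. The right-hand side
telescopes over the episodes to `2 log (N_{m+1}(z) + 1) ≤ 2 log (T + 1) ≤ 2 (1 + log T)`, and
summing over `z` gives the factor `|Z|`.
-/

open Finset Real

lemma div_le_two_mul_log_add_sub_log {x y : ℝ} (hx : 0 < x) (hy : 0 ≤ y) (hyx : y ≤ x) :
    y / x ≤ 2 * (log (x + y) - log x) := by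
  have hxy : 0 < x + y := by linarith
  have hlog : y / (x + y) ≤ log (x + y) - log x := by
    have := one_sub_inv_le_log_of_pos (div_pos hxy hx)
    rwa [log_div hxy.ne' hx.ne', inv_div, one_sub_div hxy.ne', add_sub_cancel_left] at this
  have hhalf : y / x ≤ 2 * (y / (x + y)) := by
    rw [mul_div_assoc', div_le_div_iff₀ hx hxy]
    nlinarith
  linarith

lemma log_natCast_add_one_le_one_add_log (n : ℕ) : log (n + 1) ≤ 1 + log n := by
  rcases Nat.eq_zero_or_pos n with rfl | hn
  · simp
  have hn' : (1 : ℝ) ≤ n := by exact_mod_cast hn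
  calc log (n + 1) ≤ log (2 * n) := log_le_log (by positivity) (by linarith)
    _ = log 2 + log n := log_mul two_ne_zero (by positivity)
    _ ≤ 1 + log n := by linarith [log_two_lt_d9]

lemma sum_div_succ_le_two_mul_log {a b : ℕ → ℕ} {m : ℕ}
    (hab : ∀ k ∈ Icc 1 m, a (k + 1) = a k + b k) (hb : ∀ k ∈ Icc 1 m, b k ≤ max 1 (a k)) :
    ∑ k ∈ Icc 1 m, (b k : ℝ) / (a k + 1) ≤
      2 * (log (a (m + 1) + 1) - log (a 1 + 1)) := by
  calc ∑ k ∈ Icc 1 m, (b k : ℝ) / (a k + 1)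
      ≤ ∑ k ∈ Icc 1 m, 2 * (log (a (k + 1) + 1) - log (a k + 1)) := by
        refine sum_le_sum fun k hk => ?_
        have hbk : (b k : ℝ) ≤ a k + 1 := by
          exact_mod_cast (hb k hk).trans (max_le (by omega) (by omega))
        have hsucc : (a (k + 1) : ℝ) + 1 = (a k + 1) + b k := by
          rw [hab k hk]; push_cast; ring
        rw [hsucc]
        exact div_le_two_mul_log_add_sub_log (by positivity) (by positivity) hbk
    _ = 2 * (log (a (m + 1) + 1) - log (a 1 + 1)) := by
        rw [← mul_sum, ← Ico_add_one_right_eq_Icc,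
          sum_Ico_sub (f := fun k => log ((a k : ℝ) + 1)) (by omega)]

lemma card_filter_Ico_add_card_filter_Ico {p : ℕ → Prop} [DecidablePred p] {a b c : ℕ}
    (hab : a ≤ b) (hbc : b ≤ c) :
    #{s ∈ Ico a b | p s} + #{s ∈ Ico b c | p s} = #{s ∈ Ico a c | p s} := by
  rw [← Ico_union_Ico_eq_Ico hab hbc, filter_union,
    card_union_of_disjoint (disjoint_filter_filter (Ico_disjoint_Ico_consecutive a b c))]

lemma apply_one_le_apply_of_lt_succ {t : ℕ → ℕ} {m : ℕ}
    (hmono : ∀ k, 1 ≤ k → k ≤ m → t k < t (k + 1)) {k : ℕ} (hk1 : 1 ≤ k) (hkm : k ≤ m + 1) :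
    t 1 ≤ t k := by
  induction k, hk1 using Nat.le_induction with
  | base => rfl
  | succ k hk ih => exact (ih (by omega)).trans (hmono k hk (by omega)).le

theorem stmt_16_general {Z : Type*} [Fintype Z] [DecidableEq Z]
    (T : ℕ) (z : ℕ → Z)
    (m : ℕ) (t : ℕ → ℕ) (ht1 : t 1 = 1) (htm : t (m + 1) = T + 1)
    (hmono : ∀ k, 1 ≤ k → k ≤ m → t k < t (k + 1))
    (N ν : ℕ → Z → ℕ)
    (hN : ∀ k zz, N k zz = ((Finset.Ico 1 (t k)).filter fun s => z s = zz).card)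
    (hν : ∀ k zz, ν k zz = ((Finset.Ico (t k) (t (k + 1))).filter fun s => z s = zz).card)
    (hdbl : ∀ k zz, 1 ≤ k → k ≤ m → ν k zz ≤ max 1 (N k zz)) :
    ∑ k ∈ Finset.Icc 1 m, ∑ zz : Z, (ν k zz : ℝ) / (N k zz + 1) ≤
      2 * Fintype.card Z * (1 + Real.log T) := by
  have hrec : ∀ zz, ∀ k ∈ Icc 1 m, N (k + 1) zz = N k zz + ν k zz := fun zz k hk => by
    obtain ⟨hk1, hkm⟩ := mem_Icc.mp hk
    rw [hN, hN, hν, card_filter_Ico_add_card_filter_Ico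
      (ht1 ▸ apply_one_le_apply_of_lt_succ hmono hk1 (by omega)) (hmono k hk1 hkm).le]
  have hfirst : ∀ zz, N 1 zz = 0 := fun zz => by simp [hN, ht1]
  have hlast : ∀ zz, N (m + 1) zz ≤ T := fun zz => by
    simpa [hN, htm] using card_filter_le (Ico 1 (T + 1)) fun s => z s = zz
  have hperz : ∀ zz, ∑ k ∈ Icc 1 m, (ν k zz : ℝ) / (N k zz + 1) ≤ 2 * (1 + log T) := by
    intro zz
    have hlog : log ((N (m + 1) zz : ℝ) + 1) ≤ log ((T : ℝ) + 1) :=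
      log_le_log (by positivity) (by exact_mod_cast Nat.succ_le_succ (hlast zz))
    have := sum_div_succ_le_two_mul_log (hrec zz) fun k hk =>
      hdbl k zz (mem_Icc.mp hk).1 (mem_Icc.mp hk).2
    rw [hfirst zz, Nat.cast_zero, zero_add, log_one, sub_zero] at this
    linarith [log_natCast_add_one_le_one_add_log T]
  calc ∑ k ∈ Icc 1 m, ∑ zz : Z, (ν k zz : ℝ) / (N k zz + 1)
      = ∑ zz : Z, ∑ k ∈ Icc 1 m, (ν k zz : ℝ) / (N k zz + 1) := sum_comm
    _ ≤ ∑ _zz : Z, 2 * (1 + log T) := sum_le_sum fun zz _ => hperz zz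
    _ = 2 * Fintype.card Z * (1 + log T) := by
        rw [sum_const, card_univ, nsmul_eq_mul]; ring

/-- **Cumulative visit-ratio bound under the doubling episode rule (Eq. nu.over.n).**
Let `(z t)` for `t = 1, …, T` be a sequence in a finite set `Z`, with episode start times
`1 = t 1 < t 2 < ⋯ < t (m+1) = T + 1`, and let `N k z` (resp. `ν k z`) count the occurrences
of `z` before episode `k` (resp. during episode `k`). If `ν k z ≤ max 1 (N k z)` for all
`k ∈ {1,…,m}` and `z`, then `∑_{k=1}^m ∑_z ν k z / (N k z + 1) ≤ 2·|Z|·(1 + ln T)`. -/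
theorem stmt_16 {Z : Type*} [Fintype Z] [Nonempty Z] [DecidableEq Z]
    (T : ℕ) (hT : 1 ≤ T) (z : ℕ → Z)
    (m : ℕ) (t : ℕ → ℕ) (ht1 : t 1 = 1) (htm : t (m + 1) = T + 1)
    (hmono : ∀ k, 1 ≤ k → k ≤ m → t k < t (k + 1))
    (N ν : ℕ → Z → ℕ)
    (hN : ∀ k zz, N k zz = ((Finset.Ico 1 (t k)).filter fun s => z s = zz).card)
    (hν : ∀ k zz, ν k zz = ((Finset.Ico (t k) (t (k + 1))).filter fun s => z s = zz).card)
    (hdbl : ∀ k zz, 1 ≤ k → k ≤ m → ν k zz ≤ max 1 (N k zz)) :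
    ∑ k ∈ Finset.Icc 1 m, ∑ zz : Z, (ν k zz : ℝ) / (N k zz + 1) ≤
      2 * Fintype.card Z * (1 + Real.log T) :=
  stmt_16_general T z m t ht1 htm hmono N ν hN hν hdbl
end
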